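/- If A and B are closed under stuttering, then ◇(¬A ∧ ○A ∧ ○B) is closed under stuttering. -/

import Mathlib

def State := String → Bool

def StSeq := ℕ → State

def drop (k : ℕ) (s : StSeq) : StSeq := fun n => s (k + n)

def stutter (s : StSeq) (i : ℕ) : StSeq := fun n => if n ≤ i then s n else s (n - 1)

def CUS (F : StSeq → Prop) : Prop := ∀ (s : StSeq) (i : ℕ), F s ↔ F (stutter s i)

def Var (a : String) : StSeq → Prop := fun s => s 0 a = true

def Not' (F : StSeq → Prop) : StSeq → Prop := fun s => ¬ F s

def And' (F G : StSeq → Prop) : StSeq → Prop := fun s => F s ∧ G s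

def Or' (F G : StSeq → Prop) : StSeq → Prop := fun s => F s ∨ G s

def Imp' (F G : StSeq → Prop) : StSeq → Prop := fun s => F s → G s

def Iff' (F G : StSeq → Prop) : StSeq → Prop := fun s => F s ↔ G s

def Next (F : StSeq → Prop) : StSeq → Prop := fun s => F (drop 1 s)

def Always (F : StSeq → Prop) : StSeq → Prop := fun s => ∀ k, F (drop k s)

def Ev (F : StSeq → Prop) : StSeq → Prop := fun s => ∃ k, F (drop k s)

def Until' (F G : StSeq → Prop) : StSeq → Prop :=
  fun s => ∃ k, G (drop k s) ∧ ∀ j < k, F (drop j s)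

def Up (F : StSeq → Prop) : StSeq → Prop := And' (Not' F) (Next F)

def Down (F : StSeq → Prop) : StSeq → Prop := And' F (Next (Not' F))

def AnyEdge (F : StSeq → Prop) : StSeq → Prop := Or' (Up F) (Down F)

/-! A witness position `k` of `◇(¬A ∧ ○A ∧ ○B)` corresponds to a witness in the stuttered
sequence: before the repeated state the suffixes agree up to stuttering, after it they are
literally equal up to a shift by one. The repeated position itself can never be a witness,
since there `A` would have to change value between two equal states. -/

lemma drop_drop (j k : ℕ) (s : StSeq) : drop j (drop k s) = drop (k + j) s := by
  funext n
  simp only [drop, Nat.add_assoc]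

lemma drop_stutter_of_le {s : StSeq} {i k : ℕ} (h : k ≤ i) :
    drop k (stutter s i) = stutter (drop k s) (i - k) := by
  funext n
  simp only [drop, stutter]
  rcases le_or_gt (k + n) i with hn | hn
  · rw [if_pos hn, if_pos (by omega)]
  · rw [if_neg (by omega), if_neg (by omega), Nat.add_sub_assoc (by omega)]

lemma drop_stutter_of_lt {s : StSeq} {i k : ℕ} (h : i < k) :
    drop k (stutter s i) = drop (k - 1) s := by
  funext n
  simp only [drop, stutter]
  rw [if_neg (by omega)]
  congr 1
  omega

lemma CUS.drop_stutter_iff_of_le {F : StSeq → Prop} (hF : CUS F) {s : StSeq} {i k : ℕ}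
    (h : k ≤ i) : F (drop k (stutter s i)) ↔ F (drop k s) := by
  rw [drop_stutter_of_le h]
  exact (hF _ _).symm

lemma CUS.not_up_drop_stutter {F : StSeq → Prop} (hF : CUS F) (s : StSeq) (i : ℕ) :
    ¬ Up F (drop i (stutter s i)) := by
  rintro ⟨hnot, hnext⟩
  have hrepeat : drop 1 (drop i (stutter s i)) = drop i s := by
    rw [drop_drop, drop_stutter_of_lt (Nat.lt_add_one i), Nat.add_sub_cancel]
  exact hnot ((hF.drop_stutter_iff_of_le le_rfl).2 (hrepeat ▸ hnext))

lemma cus_ev_of_stutter {G : StSeq → Prop}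
    (hbefore : ∀ s i k, k < i → (G (drop k (stutter s i)) ↔ G (drop k s)))
    (hat : ∀ s i, ¬ G (drop i (stutter s i))) : CUS (Ev G) := by
  intro s i
  constructor
  · rintro ⟨k, hk⟩
    rcases lt_or_ge k i with hki | hik
    · exact ⟨k, (hbefore s i k hki).2 hk⟩
    · refine ⟨k + 1, ?_⟩
      rwa [drop_stutter_of_lt (Nat.lt_add_one_of_le hik), Nat.add_sub_cancel]
  · rintro ⟨k, hk⟩
    rcases lt_trichotomy k i with hki | rfl | hik
    · exact ⟨k, (hbefore s i k hki).1 hk⟩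
    · exact (hat s k hk).elim
    · exact ⟨k - 1, by rwa [drop_stutter_of_lt hik] at hk⟩

theorem main_theorem (A B : StSeq → Prop) (hA : CUS A) (hB : CUS B) :
    CUS (Ev (And' (Not' A) (And' (Next A) (Next B)))) := by
  refine cus_ev_of_stutter (fun s i k hki => ?_) (fun s i ⟨hnA, hA1, _⟩ =>
    hA.not_up_drop_stutter s i ⟨hnA, hA1⟩)
  simp only [And', Not', Next, drop_drop]
  rw [hA.drop_stutter_iff_of_le hki.le, hA.drop_stutter_iff_of_le hki,
    hB.drop_stutter_iff_of_le hki]
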